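/- Consider: compact convex U ⊆ ℝ^{n_u} and compact W ⊆ ℝ^{n_w}; x_ss : ℝ^{n_u} × ℝ^{n_w} → ℝ^{n_x} with ‖x_ss(u,w) − x_ss(u',w)‖ ≤ ℓ_x‖u − u'‖ for u, u' ∈ U, w ∈ W; g : ℝ^{n_x} × ℝ^{n_w} → ℝ^{n_y} with ‖g(x,w) − g(x',w)‖ ≤ ℓ_g‖x − x'‖; the steady-state input-output map h(u,w) := g(x_ss(u,w), w); V : ℝ^{n_x} × U × W → ℝ with α₁‖x − x_ss(u,w)‖² ≤ V(x,u,w) ≤ α₂‖x − x_ss(u,w)‖² (α₂ ≥ α₁ > 0); a K-function σ_c; a symmetric positive definite matrix P; constants μ > 0, c_T ∈ (0,1), ℓ_T, ℓ_{u*} > 0; a map T : ℝ^{n_u} × ℝ^{n_y} → ℝ^{n_u} with ‖T(u,y) − T(u,y')‖ ≤ ℓ_T‖y − y'‖ for all u, y, y'; and a map u* : W → U such that, with T̃(u,w) := T(u, h(u,w)), for every w ∈ W: u*(w) = T̃(u*(w), w), ‖T̃(u,w) − u*(w)‖_P ≤ c_T‖u − u*(w)‖_P for all u ∈ U, and ‖u*(w')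 − u*(w)‖ ≤ ℓ_{u*}‖w' − w‖. Let τ > log(α₂/α₁)/μ and ε ∈ (0,1] with ε < ε̄(τ) := e^{τμ/2}(e^{τμ/2} − √(α₂/α₁)) / (ℓ_g·ℓ_x·ℓ_T·(1 + κ(P)(1 + c_T)/(1 − c_T))·(α₂/α₁)). Let sequences x^k ∈ ℝ^{n_x}, u^k ∈ U, w^k ∈ W, z^k ≥ 0 satisfy: ‖w^{k+1} − w^k‖ ≤ τ·z^k; for every fixed u ∈ U, V(x^{k+1}, u, w^{k+1}) ≤ e^{−μτ}·V(x^k, u, w^k) + τ·σ_c(z^k); y^{k+1} = g(x^{k+1}, w^{k+1}); and u^{k+1} = (1 − ε)·u^k + ε·T(u^k, y^{k+1}). Then there exist constants η₁, η₂ > 0 and c_M ∈ [0,1) such that, with δx^k := x^k − x_ss(u^k, w^k), δu^k := u^k − u*(w^k), c_W := √(α₂/α₁)e^{−τμ/2}, and σ := √σ_c, for all k: ‖(δx^k, δu^k)‖ ≤ η₁·c_M^k·‖(δx^0, δu^0)‖ + γ(sup_{0 ≤ s ≤ k−1} z^s), where γ(ζ) := η₂·(c_M/(1 − c_M))·‖(ℓ_{u*}·τ·ζ,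 (√τ/c_W)·σ(ζ))‖ is a K-function. -/

import Mathlib

/-!
Measure the plant error by `p = √(V / α₁)` and the input error by `d = ‖u - u*(w)‖_P`.
Along one step of the closed loop, `V` decays by `e^{-μτ}`, `T̃(·, w)` contracts in the `P`-norm,
and the relaxation moves `u` by only `O(ε)`; this gives coupled estimates
`p⁺ ≤ A p + B d + O(ζ)` and `d⁺ ≤ C p + D d + O(ζ)` with `A = c_W (1 + O(ε))`,
`D = 1 - ε (1 - c_T)`, `B, C = O(ε)` and `ζ = ℓ_{u*} τ z + √(τ σ_c(z) / α₁)`.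
The bound `ε < ε̄(τ)` implies the small-gain condition `B C < (1 - A) (1 - D)`, under which
the weighted maximum `max p (d / θ)` contracts at a rate `c_M < 1` for a suitable `θ`; summing the
geometric series and returning to Euclidean norms gives the ISS estimate.
-/

/-- A `K`-function: continuous, strictly increasing on `[0,∞)` and vanishing at `0`. -/
def IsKFunction (γ : ℝ → ℝ) : Prop :=
  ContinuousOn γ (Set.Ici 0) ∧ StrictMonoOn γ (Set.Ici 0) ∧ γ 0 = 0

/-- Largest eigenvalue of a Hermitian (symmetric) real matrix. -/
noncomputable def eigMax {n : ℕ} {P : Matrix (Fin n) (Fin n) ℝ} (hP : P.IsHermitian) : ℝ :=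
  ⨆ i, hP.eigenvalues i

/-- Smallest eigenvalue of a Hermitian (symmetric) real matrix. -/
noncomputable def eigMin {n : ℕ} {P : Matrix (Fin n) (Fin n) ℝ} (hP : P.IsHermitian) : ℝ :=
  ⨅ i, hP.eigenvalues i

/-- The `P`-weighted norm `‖a‖_P = √(aᵀ P a)`. -/
noncomputable def pnorm {n : ℕ} (P : Matrix (Fin n) (Fin n) ℝ) (a : EuclideanSpace ℝ (Fin n)) : ℝ :=
  Real.sqrt (dotProduct (fun i => a i) (P.mulVec fun i => a i))

theorem sqrt_le_mul_sqrt_add_sqrt {a a' e b : ℝ} (he : 0 ≤ e) (ha : 0 ≤ a) (hb : 0 ≤ b)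
    (h : a' ≤ e ^ 2 * a + b) : √a' ≤ e * √a + √b := by
  refine Real.sqrt_le_iff.2 ⟨by positivity, h.trans ?_⟩
  nlinarith [Real.sq_sqrt ha, Real.sq_sqrt hb,
    mul_nonneg (mul_nonneg he (Real.sqrt_nonneg a)) (Real.sqrt_nonneg b)]

theorem sqrt_sq_add_sq_le_add {a b : ℝ} (ha : 0 ≤ a) (hb : 0 ≤ b) : √(a ^ 2 + b ^ 2) ≤ a + b :=
  Real.sqrt_le_iff.2 ⟨by positivity, by nlinarith⟩

theorem sqrt_le_mul_of_le_sq_mul_sq {a r t : ℝ} (hr : 0 ≤ r) (ht : 0 ≤ t)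
    (h : a ≤ r ^ 2 * t ^ 2) : √a ≤ r * t :=
  Real.sqrt_le_iff.2 ⟨by positivity, by rwa [mul_pow]⟩

namespace Matrix
variable {n : Type*} [Fintype n] [DecidableEq n] {A : Matrix n n ℝ}

theorem IsHermitian.posSemidef_smul_one_sub (hA : A.IsHermitian) {c : ℝ}
    (h : ∀ i, hA.eigenvalues i ≤ c) : (c • 1 - A).PosSemidef := by
  rw [posSemidef_iff_isHermitian_and_spectrum_nonneg, ← Algebra.algebraMap_eq_smul_one,
    ← spectrum.singleton_sub_eq, hA.spectrum_real_eq_range_eigenvalues]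
  refine ⟨(IsSelfAdjoint.algebraMap _ (.all c)).sub hA, ?_⟩
  rintro _ ⟨c, rfl, _, ⟨i, rfl⟩, rfl⟩
  simpa using h i

theorem IsHermitian.posSemidef_sub_smul_one (hA : A.IsHermitian) {c : ℝ}
    (h : ∀ i, c ≤ hA.eigenvalues i) : (A - c • 1).PosSemidef := by
  rw [posSemidef_iff_isHermitian_and_spectrum_nonneg, ← Algebra.algebraMap_eq_smul_one,
    ← spectrum.sub_singleton_eq, hA.spectrum_real_eq_range_eigenvalues]
  refine ⟨hA.sub (IsSelfAdjoint.algebraMap _ (.all c)), ?_⟩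
  rintro _ ⟨_, ⟨i, rfl⟩, c, rfl, rfl⟩
  simpa using h i

end Matrix

section PNorm
variable {n : ℕ} {P : Matrix (Fin n) (Fin n) ℝ}

theorem pnorm_eq_norm (hP : P.PosSemidef) (a : EuclideanSpace ℝ (Fin n)) :
    pnorm P a = @Norm.norm _ (P.toSeminormedAddCommGroup hP).toNorm (WithLp.ofLp a) := by
  rw [pnorm, @norm_eq_sqrt_re_inner ℝ _ _ (P.toSeminormedAddCommGroup hP)
    (P.toInnerProductSpace hP)]
  simp [inner, dotProduct_comm]

theorem pnorm_add_le (hP : P.PosSemidef) (a b : EuclideanSpace ℝ (Fin n)) :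
    pnorm P (a + b) ≤ pnorm P a + pnorm P b := by
  simp only [pnorm_eq_norm hP, WithLp.ofLp_add]
  exact @norm_add_le _ (P.toSeminormedAddCommGroup hP).toSeminormedAddGroup _ _

theorem pnorm_smul (c : ℝ) (a : EuclideanSpace ℝ (Fin n)) :
    pnorm P (c • a) = |c| * pnorm P a := by
  have : (fun i => (c • a) i) ⬝ᵥ P.mulVec (fun i => (c • a) i)
      = c ^ 2 * ((fun i => a i) ⬝ᵥ P.mulVec fun i => a i) := by
    change (c • fun i => a i) ⬝ᵥ P.mulVec (c • fun i => a i) = _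
    simp only [Matrix.mulVec_smul, dotProduct_smul, smul_dotProduct, smul_eq_mul]
    ring
  rw [pnorm, pnorm, this, Real.sqrt_mul (sq_nonneg c), Real.sqrt_sq_eq_abs]

theorem dotProduct_self_eq_norm_sq (a : EuclideanSpace ℝ (Fin n)) :
    (fun i => a i) ⬝ᵥ (fun i => a i) = ‖a‖ ^ 2 := by
  rw [EuclideanSpace.real_norm_sq_eq]; simp [dotProduct, sq]

theorem pnorm_le_sqrt_eigMax_mul_norm (hP : P.IsHermitian) (a : EuclideanSpace ℝ (Fin n)) :
    pnorm P a ≤ √(eigMax hP) * ‖a‖ := by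
  have hle : ∀ i, hP.eigenvalues i ≤ eigMax hP := fun i =>
    le_ciSup (Set.finite_range hP.eigenvalues).bddAbove i
  have := (hP.posSemidef_smul_one_sub hle).dotProduct_mulVec_nonneg fun i => a i
  simp only [star_trivial, Matrix.sub_mulVec, Matrix.smul_mulVec, Matrix.one_mulVec,
    dotProduct_sub, dotProduct_smul, smul_eq_mul, dotProduct_self_eq_norm_sq] at this
  rw [pnorm, ← Real.sqrt_sq (norm_nonneg a), ← Real.sqrt_mul' _ (sq_nonneg _)]
  exact Real.sqrt_le_sqrt (by linarith)

theorem sqrt_eigMin_mul_norm_le_pnorm (hP : P.IsHermitian) (a : EuclideanSpace ℝ (Fin n)) :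
    √(eigMin hP) * ‖a‖ ≤ pnorm P a := by
  have hle : ∀ i, eigMin hP ≤ hP.eigenvalues i := fun i =>
    ciInf_le (Set.finite_range hP.eigenvalues).bddBelow i
  have := (hP.posSemidef_sub_smul_one hle).dotProduct_mulVec_nonneg fun i => a i
  simp only [star_trivial, Matrix.sub_mulVec, Matrix.smul_mulVec, Matrix.one_mulVec,
    dotProduct_sub, dotProduct_smul, smul_eq_mul, dotProduct_self_eq_norm_sq] at this
  rw [pnorm, ← Real.sqrt_sq (norm_nonneg a), ← Real.sqrt_mul' _ (sq_nonneg _)]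
  exact Real.sqrt_le_sqrt (by linarith)

theorem eigMin_pos (hP : P.PosDef) (hn : 0 < n) : 0 < eigMin hP.1 := by
  have : Nonempty (Fin n) := ⟨⟨0, hn⟩⟩
  obtain ⟨i, hi⟩ := Finite.exists_min hP.1.eigenvalues
  exact (hP.eigenvalues_pos i).trans_le (le_ciInf hi)

theorem eigMin_le_eigMax (hP : P.IsHermitian) (hn : 0 < n) : eigMin hP ≤ eigMax hP := by
  have : Nonempty (Fin n) := ⟨⟨0, hn⟩⟩
  exact ciInf_le_ciSup (Set.finite_range _).bddBelow (Set.finite_range _).bddAbove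

theorem norm_le_pnorm_div_sqrt_eigMin (hP : P.IsHermitian) (hm : 0 < eigMin hP)
    (a : EuclideanSpace ℝ (Fin n)) : ‖a‖ ≤ pnorm P a / √(eigMin hP) := by
  rw [le_div_iff₀ (Real.sqrt_pos.2 hm), mul_comm]
  exact sqrt_eigMin_mul_norm_le_pnorm hP a

theorem pnorm_sub_le_pnorm_sub_add (hP : P.PosDef)
    (a b c : EuclideanSpace ℝ (Fin n)) :
    pnorm P (a - c) ≤ pnorm P (a - b) + √(eigMax hP.1) * ‖c - b‖ := by
  calc pnorm P (a - c) ≤ pnorm P (a - b) + pnorm P (b - c) := by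
        simpa using pnorm_add_le hP.posSemidef (a - b) (b - c)
    _ ≤ pnorm P (a - b) + √(eigMax hP.1) * ‖c - b‖ := by
        rw [norm_sub_rev]; gcongr; exact pnorm_le_sqrt_eigMax_mul_norm hP.1 _

theorem sqrt_sq_add_sq_norm_le_mul_max_pnorm (hP : P.IsHermitian) (hm : 0 < eigMin hP)
    {a p : ℝ} (ha : 0 ≤ a) (hap : a ≤ p) (b : EuclideanSpace ℝ (Fin n)) :
    √(a ^ 2 + ‖b‖ ^ 2) ≤ (1 + (√(eigMin hP))⁻¹) * max p (pnorm P b) := by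
  have hb := norm_le_pnorm_div_sqrt_eigMin hP hm b
  rw [div_eq_inv_mul] at hb
  have := inv_pos.2 (Real.sqrt_pos.2 hm)
  have := le_max_left p (pnorm P b)
  have := le_max_right p (pnorm P b)
  nlinarith [sqrt_sq_add_sq_le_add ha (norm_nonneg b)]

theorem max_pnorm_le_mul_sqrt_sq_add_sq_norm (hP : P.IsHermitian) {a p r : ℝ} (hr : 0 ≤ r)
    (hpa : p ≤ r * a) (b : EuclideanSpace ℝ (Fin n)) :
    max p (pnorm P b) ≤ max r √(eigMax hP) * √(a ^ 2 + ‖b‖ ^ 2) := by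
  have ha : |a| ≤ √(a ^ 2 + ‖b‖ ^ 2) := Real.abs_le_sqrt (le_add_of_nonneg_right (sq_nonneg _))
  have hb : ‖b‖ ≤ √(a ^ 2 + ‖b‖ ^ 2) :=
    Real.le_sqrt_of_sq_le (le_add_of_nonneg_left (sq_nonneg _))
  refine max_le (hpa.trans ?_) ((pnorm_le_sqrt_eigMax_mul_norm hP b).trans ?_)
  · exact (mul_le_mul_of_nonneg_left (le_abs_self a) hr).trans
      (mul_le_mul (le_max_left _ _) ha (abs_nonneg a) (hr.trans (le_max_left _ _)))
  · exact mul_le_mul (le_max_right _ _) hb (norm_nonneg b)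
      ((Real.sqrt_nonneg _).trans (le_max_right _ _))

end PNorm

section RelaxedUpdate
variable {n : ℕ} {P : Matrix (Fin n) (Fin n) ℝ} {ε c : ℝ} {u t t₀ v : EuclideanSpace ℝ (Fin n)}

theorem pnorm_relaxed_sub_le (hP : P.PosDef) (hε0 : 0 ≤ ε) (hε1 : ε ≤ 1)
    (hcontr : pnorm P (t₀ - v) ≤ c * pnorm P (u - v)) :
    pnorm P ((1 - ε) • u + ε • t - v)
      ≤ (1 - ε * (1 - c)) * pnorm P (u - v) + ε * (√(eigMax hP.1) * ‖t - t₀‖) := by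
  have hsplit : (1 - ε) • u + ε • t - v = (1 - ε) • (u - v) + ε • (t - t₀) + ε • (t₀ - v) := by
    module
  have h₁ := pnorm_le_sqrt_eigMax_mul_norm hP.1 (t - t₀)
  calc pnorm P ((1 - ε) • u + ε • t - v)
      ≤ pnorm P ((1 - ε) • (u - v)) + pnorm P (ε • (t - t₀)) + pnorm P (ε • (t₀ - v)) := by
        rw [hsplit]
        exact (pnorm_add_le hP.posSemidef _ _).trans
          (by gcongr; exact pnorm_add_le hP.posSemidef _ _)
    _ ≤ (1 - ε) * pnorm P (u - v) + ε * (√(eigMax hP.1) * ‖t - t₀‖)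
        + ε * (c * pnorm P (u - v)) := by
        rw [pnorm_smul, pnorm_smul, pnorm_smul, abs_of_nonneg (by linarith), abs_of_nonneg hε0]
        gcongr
    _ = (1 - ε * (1 - c)) * pnorm P (u - v) + ε * (√(eigMax hP.1) * ‖t - t₀‖) := by ring

theorem norm_relaxed_sub_self_le (hP : P.IsHermitian) (hm : 0 < eigMin hP) (hε0 : 0 ≤ ε)
    (hcontr : pnorm P (t₀ - v) ≤ c * pnorm P (u - v)) :
    ‖(1 - ε) • u + ε • t - u‖ ≤ ε * (‖t - t₀‖ + (1 + c) * pnorm P (u - v) / √(eigMin hP)) := by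
  have hsplit : (1 - ε) • u + ε • t - u = ε • ((t - t₀) + (t₀ - v) + (v - u)) := by module
  have h₁ := norm_le_pnorm_div_sqrt_eigMin hP hm (t₀ - v)
  have h₂ := norm_le_pnorm_div_sqrt_eigMin hP hm (u - v)
  rw [hsplit, norm_smul, Real.norm_of_nonneg hε0]
  gcongr
  calc ‖t - t₀ + (t₀ - v) + (v - u)‖ ≤ ‖t - t₀‖ + ‖t₀ - v‖ + ‖u - v‖ := by
        rw [norm_sub_rev u v]; exact norm_add₃_le
    _ ≤ ‖t - t₀‖ + c * pnorm P (u - v) / √(eigMin hP) + pnorm P (u - v) / √(eigMin hP) := by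
        gcongr
        exact h₁.trans (by gcongr)
    _ = _ := by ring

end RelaxedUpdate

theorem exists_weight_of_small_gain {A B C D : ℝ} (hB : 0 ≤ B) (hC : 0 ≤ C)
    (hD1 : D < 1) (hgain : B * C < (1 - A) * (1 - D)) :
    ∃ θ c : ℝ, 0 < θ ∧ 0 < c ∧ c < 1 ∧ A + B * θ ≤ c ∧ D + C / θ ≤ c := by
  -- `θ` exceeds `C / (1 - D)` by a margin small enough to keep `B * θ < 1 - A`
  set δ := ((1 - A) * (1 - D) - B * C) / (2 * (B + 1))
  have hδ : 0 < δ := div_pos (by linarith) (by linarith)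
  have hD : 0 < 1 - D := by linarith
  set θ := (C + δ) / (1 - D)
  have hθ : 0 < θ := div_pos (by linarith) hD
  have hθD : θ * (1 - D) = C + δ := div_mul_cancel₀ _ hD.ne'
  have hBδ : 2 * (B + 1) * δ = (1 - A) * (1 - D) - B * C := mul_div_cancel₀ _ (by linarith)
  have hBθ : A + B * θ < 1 := by
    have : B * θ * (1 - D) < (1 - A) * (1 - D) := by
      rw [mul_assoc, hθD]; nlinarith
    nlinarith
  have hCθ : D + C / θ < 1 := by
    rw [← lt_sub_iff_add_lt', div_lt_iff₀ hθ]; nlinarith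
  refine ⟨θ, max (max (A + B * θ) (D + C / θ)) (1 / 2), hθ, by positivity,
    max_lt (max_lt hBθ hCθ) (by norm_num), ?_, ?_⟩
  · exact (le_max_left _ _).trans (le_max_left _ _)
  · exact (le_max_right _ _).trans (le_max_left _ _)

theorem le_pow_mul_add_div_of_le_mul_add {N G : ℕ → ℝ} {c M : ℝ} (hc0 : 0 ≤ c) (hc1 : c < 1)
    (hM : 0 ≤ M) (hN : ∀ j, N (j + 1) ≤ c * N j + G j) {k : ℕ} (hG : ∀ j < k, G j ≤ M) :
    N k ≤ c ^ k * N 0 + M / (1 - c) := by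
  have hc : 0 < 1 - c := by linarith
  suffices ∀ i ≤ k, N i ≤ c ^ i * N 0 + (1 - c ^ i) * (M / (1 - c)) from
    (this k le_rfl).trans (by nlinarith [pow_nonneg hc0 k, div_nonneg hM hc.le])
  intro i hi
  induction i with
  | zero => simp
  | succ i ih =>
    have hstep := hN i
    have hGi := hG i hi
    have ih := ih (by omega)
    calc N (i + 1) ≤ c * (c ^ i * N 0 + (1 - c ^ i) * (M / (1 - c))) + M := by nlinarith
      _ = c ^ (i + 1) * N 0 + (1 - c ^ (i + 1)) * (M / (1 - c)) := by
        field_simp; ring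

theorem max_le_mul_max_add_of_small_gain {A B C D θ c p d e p' d' : ℝ} (hθ : 0 < θ)
    (hA : 0 ≤ A) (hB : 0 ≤ B) (hC : 0 ≤ C) (hD : 0 ≤ D) (hp : 0 ≤ p) (hAB : A + B * θ ≤ c)
    (hDC : D + C / θ ≤ c) (hp' : p' ≤ A * p + B * d + e) (hd' : d' ≤ C * p + D * d + e) :
    max p' (d' / θ) ≤ c * max p (d / θ) + max e (e / θ) := by
  set N := max p (d / θ)
  have hN : 0 ≤ N := hp.trans (le_max_left _ _)
  have hpN : p ≤ N := le_max_left _ _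
  have hdN : d ≤ θ * N := by rw [← div_le_iff₀' hθ]; exact le_max_right _ _
  refine max_le ?_ ?_
  · calc p' ≤ (A + B * θ) * N + e := by nlinarith
      _ ≤ c * N + max e (e / θ) := by gcongr; exact le_max_left _ _
  · calc d' / θ ≤ (D + C / θ) * N + e / θ := by
          rw [div_le_iff₀ hθ]
          field_simp
          nlinarith
      _ ≤ c * N + max e (e / θ) := by gcongr; exact le_max_right _ _

theorem exists_iss_of_small_gain {A B C D : ℝ} (hA : 0 ≤ A) (hB : 0 ≤ B) (hC : 0 ≤ C)
    (hD : 0 ≤ D) (hD1 : D < 1) (hgain : B * C < (1 - A) * (1 - D)) :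
    ∃ η c : ℝ, 0 < η ∧ 0 < c ∧ c < 1 ∧ ∀ p d e : ℕ → ℝ, (∀ k, 0 ≤ p k) →
      (∀ k, p (k + 1) ≤ A * p k + B * d k + e k) →
      (∀ k, d (k + 1) ≤ C * p k + D * d k + e k) →
      ∀ k M, 0 ≤ M → (∀ j < k, e j ≤ M) →
        max (p k) (d k) ≤ η * (c ^ k * max (p 0) (d 0) + M / (1 - c)) := by
  obtain ⟨θ, c, hθ, hc0, hc1, hAB, hDC⟩ := exists_weight_of_small_gain hB hC hD1 hgain
  refine ⟨max 1 θ * (1 + θ⁻¹), c, by positivity, hc0, hc1, ?_⟩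
  intro p d e hp hpstep hdstep k M hM he
  have hθ' := inv_pos.2 hθ
  have hNk := le_pow_mul_add_div_of_le_mul_add (N := fun k => max (p k) (d k / θ)) hc0.le hc1
    (by positivity)
    (fun k => max_le_mul_max_add_of_small_gain hθ hA hB hC hD (hp k) hAB hDC (hpstep k)
      (hdstep k)) (G := fun k => max (e k) (e k / θ)) (M := (1 + θ⁻¹) * M) fun j hj => by
      have := he j hj
      refine max_le (by nlinarith) ?_
      rw [div_eq_mul_inv]; nlinarith
  have hN₀ : max (p 0) (d 0 / θ) ≤ (1 + θ⁻¹) * max (p 0) (d 0) := by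
    have := le_max_left (p 0) (d 0)
    have := le_max_right (p 0) (d 0)
    have := hp 0
    refine max_le (by nlinarith) ?_
    rw [div_eq_mul_inv]; nlinarith
  have hNk' : max (p k) (d k) ≤ max 1 θ * max (p k) (d k / θ) := by
    have hdk : d k ≤ θ * max (p k) (d k / θ) := by
      rw [← div_le_iff₀' hθ]; exact le_max_right _ _
    have := hp k
    exact max_le (by nlinarith [le_max_left (p k) (d k / θ), le_max_left 1 θ])
      (by nlinarith [le_max_left (p k) (d k / θ), le_max_right 1 θ])
  calc max (p k) (d k)
      ≤ max 1 θ * (c ^ k * ((1 + θ⁻¹) * max (p 0) (d 0)) + (1 + θ⁻¹) * M / (1 - c)) := by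
        refine hNk'.trans ?_
        gcongr
        exact hNk.trans (by gcongr)
    _ = max 1 θ * (1 + θ⁻¹) * (c ^ k * max (p 0) (d 0) + M / (1 - c)) := by ring

theorem closedLoop_small_gain {r e ε ℓx ℓT ℓg cT sm sM : ℝ} (hsm : 0 < sm) (hε0 : 0 < ε)
    (hcT1 : cT < 1)
    (hgain : ε * (ℓx * ℓT * ℓg) * e * (r * e) * (1 + sM / sm * ((1 + cT) / (1 - cT))) < 1 - r * e) :
    r * e * ℓx * ε * (1 + cT) / sm * (ε * sM * ℓT * ℓg * e)
      < (1 - r * e * (1 + ε * ℓx * ℓT * ℓg * e)) * (1 - (1 - ε * (1 - cT))) := by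
  have hcT : 0 < 1 - cT := by linarith
  have hgap : (1 - r * e * (1 + ε * ℓx * ℓT * ℓg * e)) * (1 - (1 - ε * (1 - cT)))
      - r * e * ℓx * ε * (1 + cT) / sm * (ε * sM * ℓT * ℓg * e)
      = ε * (1 - cT) * (1 - r * e - ε * (ℓx * ℓT * ℓg) * e * (r * e)
        * (1 + sM / sm * ((1 + cT) / (1 - cT)))) := by
    field_simp
    ring
  nlinarith [mul_pos (mul_pos hε0 hcT) (sub_pos.2 hgain)]

section ClosedLoop
variable {X Y Ω : Type*} [SeminormedAddCommGroup X] [SeminormedAddCommGroup Y] {n : ℕ}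
  {P : Matrix (Fin n) (Fin n) ℝ} {U : Set (EuclideanSpace ℝ (Fin n))} {Wd : Set Ω}
  {xss : EuclideanSpace ℝ (Fin n) → Ω → X} {g : X → Ω → Y}
  {T : EuclideanSpace ℝ (Fin n) → Y → EuclideanSpace ℝ (Fin n)}
  {ustar : Ω → EuclideanSpace ℝ (Fin n)} {W : X → EuclideanSpace ℝ (Fin n) → Ω → ℝ}
  {x : ℕ → X} {u : ℕ → EuclideanSpace ℝ (Fin n)} {w : ℕ → Ω} {b s : ℕ → ℝ}
  {e r ε cT ℓx ℓg ℓT : ℝ}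

theorem norm_T_sub_T_xss_succ_le (hWlow : ∀ x, ∀ v ∈ U, ∀ w ∈ Wd, ‖x - xss v w‖ ^ 2 ≤ W x v w)
    (hWdec : ∀ k, ∀ v ∈ U, W (x (k + 1)) v (w (k + 1)) ≤ e ^ 2 * W (x k) v (w k) + b k)
    (hg : ∀ x x' w, ‖g x w - g x' w‖ ≤ ℓg * ‖x - x'‖)
    (hT : ∀ u y y', ‖T u y - T u y'‖ ≤ ℓT * ‖y - y'‖)
    (huU : ∀ k, u k ∈ U) (hwW : ∀ k, w k ∈ Wd) (he : 0 ≤ e) (hb : ∀ k, 0 ≤ b k)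
    (hℓg : 0 ≤ ℓg) (hℓT : 0 ≤ ℓT) (k : ℕ) :
    ‖T (u k) (g (x (k + 1)) (w (k + 1))) - T (u k) (g (xss (u k) (w (k + 1))) (w (k + 1)))‖
      ≤ ℓT * (ℓg * (e * √(W (x k) (u k) (w k)) + √(b k))) := by
  have hρ : ‖x (k + 1) - xss (u k) (w (k + 1))‖ ≤ e * √(W (x k) (u k) (w k)) + √(b k) :=
    (Real.le_sqrt_of_sq_le (hWlow _ _ (huU k) _ (hwW (k + 1)))).trans <|
      sqrt_le_mul_sqrt_add_sqrt he ((sq_nonneg _).trans (hWlow _ _ (huU k) _ (hwW k))) (hb k)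
        (hWdec k _ (huU k))
  exact (hT _ _ _).trans (by gcongr; exact (hg _ _ _).trans (by gcongr))

theorem sqrt_lyapunov_succ_le (hW : ∀ x, ∀ v ∈ U, ∀ w ∈ Wd,
      ‖x - xss v w‖ ^ 2 ≤ W x v w ∧ W x v w ≤ r ^ 2 * ‖x - xss v w‖ ^ 2)
    (hWdec : ∀ k, ∀ v ∈ U, W (x (k + 1)) v (w (k + 1)) ≤ e ^ 2 * W (x k) v (w k) + b k)
    (hxss : ∀ v ∈ U, ∀ v' ∈ U, ∀ w ∈ Wd, ‖xss v w - xss v' w‖ ≤ ℓx * ‖v - v'‖)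
    (huU : ∀ k, u k ∈ U) (hwW : ∀ k, w k ∈ Wd) (he : 0 ≤ e) (hr : 0 ≤ r) (hb : ∀ k, 0 ≤ b k)
    (k : ℕ) :
    √(W (x (k + 1)) (u (k + 1)) (w (k + 1)))
      ≤ e * (r * (√(W (x k) (u k) (w k)) + ℓx * ‖u (k + 1) - u k‖)) + √(b k) := by
  have hmove : ‖x k - xss (u (k + 1)) (w k)‖ ≤ √(W (x k) (u k) (w k)) + ℓx * ‖u (k + 1) - u k‖ :=
    calc ‖x k - xss (u (k + 1)) (w k)‖
        ≤ ‖x k - xss (u k) (w k)‖ + ‖xss (u k) (w k) - xss (u (k + 1)) (w k)‖ :=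
          norm_sub_le_norm_sub_add_norm_sub _ _ _
      _ ≤ √(W (x k) (u k) (w k)) + ℓx * ‖u (k + 1) - u k‖ := by
        gcongr
        · exact Real.le_sqrt_of_sq_le (hW _ _ (huU k) _ (hwW k)).1
        · rw [norm_sub_rev (u (k + 1))]; exact hxss _ (huU k) _ (huU (k + 1)) _ (hwW k)
  calc √(W (x (k + 1)) (u (k + 1)) (w (k + 1)))
      ≤ e * √(W (x k) (u (k + 1)) (w k)) + √(b k) :=
        sqrt_le_mul_sqrt_add_sqrt he ((sq_nonneg _).trans (hW _ _ (huU (k + 1)) _ (hwW k)).1)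
          (hb k) (hWdec k _ (huU (k + 1)))
    _ ≤ e * (r * (√(W (x k) (u k) (w k)) + ℓx * ‖u (k + 1) - u k‖)) + √(b k) := by
        gcongr
        exact (sqrt_le_mul_of_le_sq_mul_sq hr (norm_nonneg _)
          (hW _ _ (huU (k + 1)) _ (hwW k)).2).trans (by gcongr)

theorem exists_pnorm_input_error_succ_le (hP : P.PosDef)
    (hWlow : ∀ x, ∀ v ∈ U, ∀ w ∈ Wd, ‖x - xss v w‖ ^ 2 ≤ W x v w)
    (hWdec : ∀ k, ∀ v ∈ U, W (x (k + 1)) v (w (k + 1)) ≤ e ^ 2 * W (x k) v (w k) + b k)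
    (hg : ∀ x x' w, ‖g x w - g x' w‖ ≤ ℓg * ‖x - x'‖)
    (hT : ∀ u y y', ‖T u y - T u y'‖ ≤ ℓT * ‖y - y'‖)
    (hcontr : ∀ w ∈ Wd, ∀ v ∈ U,
      pnorm P (T v (g (xss v w) w) - ustar w) ≤ cT * pnorm P (v - ustar w))
    (hdrift : ∀ k, ‖ustar (w (k + 1)) - ustar (w k)‖ ≤ s k)
    (hupd : ∀ k, u (k + 1) = (1 - ε) • u k + ε • T (u k) (g (x (k + 1)) (w (k + 1))))
    (huU : ∀ k, u k ∈ U) (hwW : ∀ k, w k ∈ Wd) (he : 0 ≤ e) (hb : ∀ k, 0 ≤ b k)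
    (hℓg : 0 ≤ ℓg) (hℓT : 0 ≤ ℓT) (hε0 : 0 ≤ ε) (hε1 : ε ≤ 1) (hcT : 0 ≤ cT) :
    ∃ K, 0 ≤ K ∧ ∀ k, pnorm P (u (k + 1) - ustar (w (k + 1)))
      ≤ ε * √(eigMax hP.1) * ℓT * ℓg * e * √(W (x k) (u k) (w k))
        + (1 - ε * (1 - cT)) * pnorm P (u k - ustar (w k)) + K * (s k + √(b k)) := by
  set sM := √(eigMax hP.1)
  have hD : 0 ≤ 1 - ε * (1 - cT) := by nlinarith
  refine ⟨(1 - ε * (1 - cT)) * sM + ε * sM * ℓT * ℓg, by positivity, fun k => ?_⟩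
  have hs : 0 ≤ s k := (norm_nonneg _).trans (hdrift k)
  have hshift := pnorm_sub_le_pnorm_sub_add hP (u k) (ustar (w k)) (ustar (w (k + 1)))
  have hstep := pnorm_relaxed_sub_le hP hε0 hε1 (hcontr _ (hwW (k + 1)) _ (huU k))
    (t := T (u k) (g (x (k + 1)) (w (k + 1))))
  have hK : 0 ≤ (1 - ε * (1 - cT)) * sM * √(b k) + ε * sM * ℓT * ℓg * s k := by positivity
  calc pnorm P (u (k + 1) - ustar (w (k + 1)))
      ≤ (1 - ε * (1 - cT)) * pnorm P (u k - ustar (w (k + 1)))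
        + ε * (sM * ‖T (u k) (g (x (k + 1)) (w (k + 1)))
          - T (u k) (g (xss (u k) (w (k + 1))) (w (k + 1)))‖) := by rw [hupd k]; exact hstep
    _ ≤ (1 - ε * (1 - cT)) * (pnorm P (u k - ustar (w k)) + sM * s k)
        + ε * (sM * (ℓT * (ℓg * (e * √(W (x k) (u k) (w k)) + √(b k))))) := by
        gcongr
        · exact hshift.trans (by gcongr; exact hdrift k)
        · exact norm_T_sub_T_xss_succ_le hWlow hWdec hg hT huU hwW he hb hℓg hℓT k
    _ ≤ _ := by linarith

theorem exists_sqrt_lyapunov_succ_le (hP : P.PosDef) (hn : 0 < n)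
    (hW : ∀ x, ∀ v ∈ U, ∀ w ∈ Wd,
      ‖x - xss v w‖ ^ 2 ≤ W x v w ∧ W x v w ≤ r ^ 2 * ‖x - xss v w‖ ^ 2)
    (hWdec : ∀ k, ∀ v ∈ U, W (x (k + 1)) v (w (k + 1)) ≤ e ^ 2 * W (x k) v (w k) + b k)
    (hxss : ∀ v ∈ U, ∀ v' ∈ U, ∀ w ∈ Wd, ‖xss v w - xss v' w‖ ≤ ℓx * ‖v - v'‖)
    (hg : ∀ x x' w, ‖g x w - g x' w‖ ≤ ℓg * ‖x - x'‖)
    (hT : ∀ u y y', ‖T u y - T u y'‖ ≤ ℓT * ‖y - y'‖)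
    (hcontr : ∀ w ∈ Wd, ∀ v ∈ U,
      pnorm P (T v (g (xss v w) w) - ustar w) ≤ cT * pnorm P (v - ustar w))
    (hdrift : ∀ k, ‖ustar (w (k + 1)) - ustar (w k)‖ ≤ s k)
    (hupd : ∀ k, u (k + 1) = (1 - ε) • u k + ε • T (u k) (g (x (k + 1)) (w (k + 1))))
    (huU : ∀ k, u k ∈ U) (hwW : ∀ k, w k ∈ Wd) (he : 0 ≤ e) (hr : 0 ≤ r) (hb : ∀ k, 0 ≤ b k)
    (hℓx : 0 ≤ ℓx) (hℓg : 0 ≤ ℓg) (hℓT : 0 ≤ ℓT) (hε0 : 0 ≤ ε) (hcT : 0 ≤ cT) :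
    ∃ K, 0 ≤ K ∧ ∀ k, √(W (x (k + 1)) (u (k + 1)) (w (k + 1)))
      ≤ r * e * (1 + ε * ℓx * ℓT * ℓg * e) * √(W (x k) (u k) (w k))
        + r * e * ℓx * ε * (1 + cT) / √(eigMin hP.1) * pnorm P (u k - ustar (w k))
        + K * (s k + √(b k)) := by
  set sm := √(eigMin hP.1)
  set sM := √(eigMax hP.1)
  have hm := eigMin_pos hP hn
  have hsm : 0 < sm := Real.sqrt_pos.2 hm
  refine ⟨r * e * ℓx * ε * (ℓT * ℓg + (1 + cT) * sM / sm) + 1, by positivity, fun k => ?_⟩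
  set p := √(W (x k) (u k) (w k))
  set d := pnorm P (u k - ustar (w k))
  have hs : 0 ≤ s k := (norm_nonneg _).trans (hdrift k)
  have hΔ : ‖u (k + 1) - u k‖
      ≤ ε * (ℓT * (ℓg * (e * p + √(b k))) + (1 + cT) * (d + sM * s k) / sm) := by
    rw [hupd k]
    refine (norm_relaxed_sub_self_le hP.1 hm hε0 (hcontr _ (hwW (k + 1)) _ (huU k))).trans ?_
    gcongr
    · exact norm_T_sub_T_xss_succ_le (fun x v hv w hw => (hW x v hv w hw).1) hWdec hg hT huU
        hwW he hb hℓg hℓT k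
    · exact (pnorm_sub_le_pnorm_sub_add hP (u k) (ustar (w k)) (ustar (w (k + 1)))).trans
        (by gcongr; exact hdrift k)
  have hK : 0 ≤ r * e * ℓx * ε * ℓT * ℓg * s k + r * e * ℓx * ε * ((1 + cT) * sM / sm) * √(b k)
      + s k := by
    positivity
  calc √(W (x (k + 1)) (u (k + 1)) (w (k + 1)))
      ≤ e * (r * (p + ℓx * ‖u (k + 1) - u k‖)) + √(b k) :=
        sqrt_lyapunov_succ_le hW hWdec hxss huU hwW he hr hb k
    _ ≤ e * (r * (p + ℓx * (ε * (ℓT * (ℓg * (e * p + √(b k)))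
          + (1 + cT) * (d + sM * s k) / sm)))) + √(b k) := by
        gcongr
    _ = r * e * (1 + ε * ℓx * ℓT * ℓg * e) * p + r * e * ℓx * ε * (1 + cT) / sm * d
        + (r * e * ℓx * ε * (ℓT * ℓg + (1 + cT) * sM / sm) + 1) * (s k + √(b k))
        - (r * e * ℓx * ε * ℓT * ℓg * s k + r * e * ℓx * ε * ((1 + cT) * sM / sm) * √(b k)
          + s k) := by
        field_simp; ring
    _ ≤ _ := sub_le_self _ hK

theorem closedLoop_iss (hP : P.PosDef) (hn : 0 < n)
    (hW : ∀ x, ∀ v ∈ U, ∀ w ∈ Wd,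
      ‖x - xss v w‖ ^ 2 ≤ W x v w ∧ W x v w ≤ r ^ 2 * ‖x - xss v w‖ ^ 2)
    (hWdec : ∀ k, ∀ v ∈ U, W (x (k + 1)) v (w (k + 1)) ≤ e ^ 2 * W (x k) v (w k) + b k)
    (hxss : ∀ v ∈ U, ∀ v' ∈ U, ∀ w ∈ Wd, ‖xss v w - xss v' w‖ ≤ ℓx * ‖v - v'‖)
    (hg : ∀ x x' w, ‖g x w - g x' w‖ ≤ ℓg * ‖x - x'‖)
    (hT : ∀ u y y', ‖T u y - T u y'‖ ≤ ℓT * ‖y - y'‖)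
    (hcontr : ∀ w ∈ Wd, ∀ v ∈ U,
      pnorm P (T v (g (xss v w) w) - ustar w) ≤ cT * pnorm P (v - ustar w))
    (hdrift : ∀ k, ‖ustar (w (k + 1)) - ustar (w k)‖ ≤ s k)
    (hupd : ∀ k, u (k + 1) = (1 - ε) • u k + ε • T (u k) (g (x (k + 1)) (w (k + 1))))
    (huU : ∀ k, u k ∈ U) (hwW : ∀ k, w k ∈ Wd) (he : 0 ≤ e) (hr : 0 ≤ r) (hb : ∀ k, 0 ≤ b k)
    (hℓx : 0 ≤ ℓx) (hℓg : 0 ≤ ℓg) (hℓT : 0 ≤ ℓT) (hε0 : 0 < ε) (hε1 : ε ≤ 1)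
    (hcT0 : 0 ≤ cT) (hcT1 : cT < 1)
    (hgain : ε * (ℓx * ℓT * ℓg) * e * (r * e)
      * (1 + √(eigMax hP.1) / √(eigMin hP.1) * ((1 + cT) / (1 - cT))) < 1 - r * e) :
    ∃ η c : ℝ, 0 < η ∧ 0 < c ∧ c < 1 ∧ ∀ k M, 0 ≤ M → (∀ j < k, s j + √(b j) ≤ M) →
      √(‖x k - xss (u k) (w k)‖ ^ 2 + ‖u k - ustar (w k)‖ ^ 2)
        ≤ η * c ^ k * √(‖x 0 - xss (u 0) (w 0)‖ ^ 2 + ‖u 0 - ustar (w 0)‖ ^ 2)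
          + η * M / (1 - c) := by
  obtain ⟨K₁, hK₁, hpstep⟩ := exists_sqrt_lyapunov_succ_le hP hn hW hWdec hxss hg hT hcontr
    hdrift hupd huU hwW he hr hb hℓx hℓg hℓT hε0.le hcT0
  obtain ⟨K₂, hK₂, hdstep⟩ := exists_pnorm_input_error_succ_le hP (fun x v hv w hw =>
    (hW x v hv w hw).1) hWdec hg hT hcontr hdrift hupd huU hwW he hb hℓg hℓT hε0.le hε1 hcT0
  set sm := √(eigMin hP.1)
  set sM := √(eigMax hP.1)
  have hsm : 0 < sm := Real.sqrt_pos.2 (eigMin_pos hP hn)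
  have hsmallgain := closedLoop_small_gain hsm hε0 hcT1 hgain
  obtain ⟨η, c, hη, hc0, hc1, hiss⟩ := exists_iss_of_small_gain (by positivity) (by positivity)
    (by positivity) (by nlinarith) (by nlinarith) hsmallgain
  set Λ := max r sM + (1 + (K₁ + K₂)) with hΛ
  refine ⟨(1 + sm⁻¹) * η * Λ, c, by positivity, hc0, hc1, fun k M hM hζ => ?_⟩
  have hζ0 : ∀ j, 0 ≤ s j + √(b j) := fun j =>
    add_nonneg ((norm_nonneg _).trans (hdrift j)) (Real.sqrt_nonneg _)
  have hmax := hiss (fun k => √(W (x k) (u k) (w k))) (fun k => pnorm P (u k - ustar (w k)))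
    (fun k => (K₁ + K₂) * (s k + √(b k))) (fun k => Real.sqrt_nonneg _)
    (fun k => (hpstep k).trans (by have := hζ0 k; gcongr; linarith))
    (fun k => (hdstep k).trans (by have := hζ0 k; gcongr; linarith))
    k ((K₁ + K₂) * M) (by positivity) (fun j hj => by gcongr; exact hζ j hj)
  set R₀ := √(‖x 0 - xss (u 0) (w 0)‖ ^ 2 + ‖u 0 - ustar (w 0)‖ ^ 2)
  have hm₀ := max_pnorm_le_mul_sqrt_sq_add_sq_norm hP.1 hr
    (sqrt_le_mul_of_le_sq_mul_sq hr (norm_nonneg _) (hW (x 0) _ (huU 0) _ (hwW 0)).2)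
    (u 0 - ustar (w 0))
  have hR₀ : 0 ≤ R₀ := Real.sqrt_nonneg _
  have hc : 0 < 1 - c := by linarith
  calc √(‖x k - xss (u k) (w k)‖ ^ 2 + ‖u k - ustar (w k)‖ ^ 2)
      ≤ (1 + sm⁻¹) * max √(W (x k) (u k) (w k)) (pnorm P (u k - ustar (w k))) :=
        sqrt_sq_add_sq_norm_le_mul_max_pnorm hP.1 (eigMin_pos hP hn) (norm_nonneg _)
          (Real.le_sqrt_of_sq_le (hW _ _ (huU k) _ (hwW k)).1) _
    _ ≤ (1 + sm⁻¹) * (η * (c ^ k * (Λ * R₀) + Λ * M / (1 - c))) := by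
        gcongr
        refine hmax.trans ?_
        gcongr
        · exact hm₀.trans (by gcongr; linarith)
        · linarith [le_max_left r sM]
    _ = (1 + sm⁻¹) * η * Λ * c ^ k * R₀ + (1 + sm⁻¹) * η * Λ * M / (1 - c) := by ring

end ClosedLoop

theorem sqrt_div_mul_exp_lt_one {α₁ α₂ μ τ : ℝ} (hα₁ : 0 < α₁) (hα₂ : 0 < α₂) (hμ : 0 < μ)
    (hτ : Real.log (α₂ / α₁) / μ < τ) : √(α₂ / α₁) * Real.exp (-(τ * μ) / 2) < 1 := by
  have hlog : α₂ / α₁ < Real.exp (τ * μ) := by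
    rw [← Real.log_lt_iff_lt_exp (by positivity), ← div_lt_iff₀ hμ]; exact hτ
  have hsq : Real.exp (τ * μ) = Real.exp (τ * μ / 2) ^ 2 := by
    rw [sq, ← Real.exp_add]; ring_nf
  have hsqrt : √(α₂ / α₁) < Real.exp (τ * μ / 2) := by
    rw [Real.sqrt_lt' (Real.exp_pos _), ← hsq]; exact hlog
  calc √(α₂ / α₁) * Real.exp (-(τ * μ) / 2)
      < Real.exp (τ * μ / 2) * Real.exp (-(τ * μ) / 2) := by gcongr
    _ = 1 := by rw [← Real.exp_add]; ring_nf; exact Real.exp_zero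

theorem sqrt_div_sqrt_le_div {a b : ℝ} (hb : 0 < b) (hab : b ≤ a) : √a / √b ≤ a / b := by
  have h1 : 1 ≤ a / b := (one_le_div hb).2 hab
  rw [← Real.sqrt_div' _ hb.le, Real.sqrt_le_iff]
  exact ⟨by positivity, by nlinarith⟩

theorem gain_lt_of_lt_epsBar {α₁ α₂ μ τ ε ℓx ℓg ℓT cT νmin νmax : ℝ} (hα₁ : 0 < α₁)
    (hα : α₁ ≤ α₂) (hμ : 0 < μ) (hτ : Real.log (α₂ / α₁) / μ < τ) (hε0 : 0 < ε)
    (hℓT : 0 ≤ ℓT) (hcT0 : 0 ≤ cT) (hcT1 : cT < 1) (hν : 0 < νmin) (hνν : νmin ≤ νmax)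
    (hεbar : ε < Real.exp (τ * μ / 2) * (Real.exp (τ * μ / 2) - √(α₂ / α₁)) /
      (ℓg * ℓx * ℓT * (1 + (νmax / νmin) * (1 + cT) / (1 - cT)) * (α₂ / α₁))) :
    ε * (max ℓx 0 * ℓT * max ℓg 0) * Real.exp (-(τ * μ) / 2)
      * (√(α₂ / α₁) * Real.exp (-(τ * μ) / 2)) * (1 + √νmax / √νmin * ((1 + cT) / (1 - cT)))
      < 1 - √(α₂ / α₁) * Real.exp (-(τ * μ) / 2) := by
  have hcW := sqrt_div_mul_exp_lt_one hα₁ (hα₁.trans_le hα) hμ hτ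
  set r := √(α₂ / α₁)
  set e := Real.exp (-(τ * μ) / 2)
  -- a nonpositive Lipschitz constant kills the gain; otherwise `ε̄` has a positive denominator
  by_cases hℓ : max ℓx 0 * ℓT * max ℓg 0 = 0
  · rw [hℓ]; linarith
  have hℓx : 0 < ℓx := by by_contra! h; simp [max_eq_right h] at hℓ
  have hℓg : 0 < ℓg := by by_contra! h; simp [max_eq_right h] at hℓ
  have hℓT' : 0 < ℓT := by by_contra! h; simp [le_antisymm h hℓT] at hℓ
  rw [max_eq_left hℓx.le, max_eq_left hℓg.le]
  have hr : 1 ≤ r := Real.one_le_sqrt.2 ((one_le_div hα₁).2 hα)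
  have hr2 : r ^ 2 = α₂ / α₁ := Real.sq_sqrt (div_nonneg (hα₁.le.trans hα) hα₁.le)
  have hcT : 0 < 1 - cT := by linarith
  have hρ : 0 ≤ (1 + cT) / (1 - cT) := div_nonneg (by linarith) hcT.le
  have hL : 0 < ℓg * ℓx * ℓT * (1 + (νmax / νmin) * (1 + cT) / (1 - cT)) * (α₂ / α₁) := by
    have : 0 ≤ νmax / νmin * (1 + cT) / (1 - cT) := by
      rw [mul_div_assoc]; exact mul_nonneg (div_nonneg (hν.le.trans hνν) hν.le) hρ
    exact mul_pos (by positivity) (div_pos (hα₁.trans_le hα) hα₁)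
  have hEe : Real.exp (τ * μ / 2) * e = 1 := by
    rw [← Real.exp_add]; ring_nf; exact Real.exp_zero
  have hεL := mul_lt_mul_of_pos_right ((lt_div_iff₀ hL).1 hεbar)
    (pow_pos (Real.exp_pos _) 2 : 0 < e ^ 2)
  calc ε * (ℓx * ℓT * ℓg) * e * (r * e) * (1 + √νmax / √νmin * ((1 + cT) / (1 - cT)))
      ≤ ε * (ℓx * ℓT * ℓg) * (r ^ 2 * e ^ 2) * (1 + νmax / νmin * ((1 + cT) / (1 - cT))) := by
        rw [show ε * (ℓx * ℓT * ℓg) * e * (r * e) = ε * (ℓx * ℓT * ℓg) * (r * e ^ 2) by ring]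
        have he : 0 ≤ e := (Real.exp_pos _).le
        gcongr _ * (?_ * _) * (1 + ?_ * _)
        · nlinarith
        · exact sqrt_div_sqrt_le_div hν hνν
    _ = ε * (ℓg * ℓx * ℓT * (1 + (νmax / νmin) * (1 + cT) / (1 - cT)) * (α₂ / α₁)) * e ^ 2 := by
        rw [← hr2]; ring
    _ < Real.exp (τ * μ / 2) * (Real.exp (τ * μ / 2) - r) * e ^ 2 := hεL
    _ = 1 - r * e := by linear_combination (Real.exp (τ * μ / 2) * e - r * e + 1) * hEe

namespace IsKFunction
variable {σ : ℝ → ℝ}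

theorem nonneg (hσ : IsKFunction σ) {t : ℝ} (ht : 0 ≤ t) : 0 ≤ σ t :=
  hσ.2.2 ▸ hσ.2.1.monotoneOn Set.self_mem_Ici ht ht

theorem const_mul_sqrt_sq_add_sq (hσ : IsKFunction σ) {η a b : ℝ} (hη : 0 < η) (ha : 0 < a)
    (hb : 0 ≤ b) : IsKFunction fun ζ => η * √((a * ζ) ^ 2 + (b * √(σ ζ)) ^ 2) := by
  refine ⟨?_, fun s hs t ht hst => ?_, by simp [hσ.2.2]⟩
  · have := hσ.1
    fun_prop
  have hσst : σ s ≤ σ t := hσ.2.1.monotoneOn hs ht hst.le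
  have hs' : (0 : ℝ) ≤ s := hs
  have hsq : (a * s) ^ 2 + (b * √(σ s)) ^ 2 < (a * t) ^ 2 + (b * √(σ t)) ^ 2 :=
    add_lt_add_of_lt_of_le (by gcongr) (by gcongr)
  exact mul_lt_mul_of_pos_left (Real.sqrt_lt_sqrt (by positivity) hsq) hη

theorem add_sqrt_le_mul_sqrt_sq_add_sq (hσ : IsKFunction σ) {a τ κ α ζ S : ℝ} (ha : 0 ≤ a)
    (hτ : 0 ≤ τ) (hκ : 0 < κ) (hα : 0 < α) (hζ : 0 ≤ ζ) (hζS : ζ ≤ S) :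
    a * ζ + √(τ * σ ζ / α) ≤ (1 + κ / √α) * √((a * S) ^ 2 + (√τ / κ * √(σ S)) ^ 2) := by
  set X := a * S
  set Y := √τ / κ * √(σ S) with hYdef
  have hX : X ≤ √(X ^ 2 + Y ^ 2) := Real.le_sqrt_of_sq_le (le_add_of_nonneg_right (sq_nonneg _))
  have hY : Y ≤ √(X ^ 2 + Y ^ 2) := Real.le_sqrt_of_sq_le (le_add_of_nonneg_left (sq_nonneg _))
  have hσζ : σ ζ ≤ σ S := hσ.2.1.monotoneOn hζ (hζ.trans hζS) hζS
  have hsqrt : √(τ * σ ζ / α) ≤ κ / √α * Y := by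
    calc √(τ * σ ζ / α) ≤ √(τ * σ S / α) := by gcongr
      _ = κ / √α * Y := by
        rw [Real.sqrt_div' _ hα.le, Real.sqrt_mul hτ, hYdef]
        field_simp
  have hκα : 0 ≤ κ / √α := by positivity
  nlinarith [mul_le_mul_of_nonneg_left hζS ha, mul_le_mul_of_nonneg_left hY hκα]

end IsKFunction

theorem stmt3_general {nx nu nw ny : ℕ} (hnu : 0 < nu)
    (U : Set (EuclideanSpace ℝ (Fin nu))) (Wd : Set (EuclideanSpace ℝ (Fin nw)))
    (xss : EuclideanSpace ℝ (Fin nu) → EuclideanSpace ℝ (Fin nw) → EuclideanSpace ℝ (Fin nx))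
    (ℓx : ℝ)
    (hxss : ∀ u ∈ U, ∀ u' ∈ U, ∀ w ∈ Wd, ‖xss u w - xss u' w‖ ≤ ℓx * ‖u - u'‖)
    (g : EuclideanSpace ℝ (Fin nx) → EuclideanSpace ℝ (Fin nw) → EuclideanSpace ℝ (Fin ny))
    (ℓg : ℝ)
    (hg : ∀ x x' w, ‖g x w - g x' w‖ ≤ ℓg * ‖x - x'‖)
    (V : EuclideanSpace ℝ (Fin nx) → EuclideanSpace ℝ (Fin nu) → EuclideanSpace ℝ (Fin nw) → ℝ)
    (α₁ α₂ : ℝ) (hα₁ : 0 < α₁) (hα : α₁ ≤ α₂)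
    (hV : ∀ x, ∀ u ∈ U, ∀ w ∈ Wd,
      α₁ * ‖x - xss u w‖^2 ≤ V x u w ∧ V x u w ≤ α₂ * ‖x - xss u w‖^2)
    (σc : ℝ → ℝ) (hσc : IsKFunction σc)
    (P : Matrix (Fin nu) (Fin nu) ℝ) (hP : P.PosDef)
    (μ cT ℓT ℓus : ℝ) (hμ : 0 < μ) (hcT : cT ∈ Set.Ioo (0:ℝ) 1)
    (hℓT : 0 < ℓT) (hℓus : 0 < ℓus)
    (T : EuclideanSpace ℝ (Fin nu) → EuclideanSpace ℝ (Fin ny) → EuclideanSpace ℝ (Fin nu))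
    (hT : ∀ u y y', ‖T u y - T u y'‖ ≤ ℓT * ‖y - y'‖)
    (ustar : EuclideanSpace ℝ (Fin nw) → EuclideanSpace ℝ (Fin nu))
    (hcontr : ∀ w ∈ Wd, ∀ u ∈ U,
      pnorm P (T u (g (xss u w) w) - ustar w) ≤ cT * pnorm P (u - ustar w))
    (hustarLip : ∀ w ∈ Wd, ∀ w' ∈ Wd, ‖ustar w' - ustar w‖ ≤ ℓus * ‖w' - w‖)
    (τ ε : ℝ)
    (hτ : Real.log (α₂/α₁) / μ < τ)
    (hε0 : 0 < ε) (hε1 : ε ≤ 1)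
    (hεbar : ε < Real.exp (τ*μ/2) * (Real.exp (τ*μ/2) - Real.sqrt (α₂/α₁)) /
      (ℓg * ℓx * ℓT * (1 + (eigMax hP.1 / eigMin hP.1) * (1 + cT) / (1 - cT)) * (α₂/α₁)))
    (x : ℕ → EuclideanSpace ℝ (Fin nx)) (u : ℕ → EuclideanSpace ℝ (Fin nu))
    (w : ℕ → EuclideanSpace ℝ (Fin nw)) (z : ℕ → ℝ)
    (huU : ∀ k, u k ∈ U) (hwW : ∀ k, w k ∈ Wd) (hz : ∀ k, 0 ≤ z k)
    (hwz : ∀ k, ‖w (k+1) - w k‖ ≤ τ * z k)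
    (hVdec : ∀ k, ∀ v ∈ U,
      V (x (k+1)) v (w (k+1)) ≤ Real.exp (-(μ*τ)) * V (x k) v (w k) + τ * σc (z k))
    (hupd : ∀ k, u (k+1) = (1-ε) • u k + ε • T (u k) (g (x (k+1)) (w (k+1)))) :
    ∃ η₁ η₂ cM : ℝ, 0 < η₁ ∧ 0 < η₂ ∧ 0 ≤ cM ∧ cM < 1 ∧
      IsKFunction (fun ζ => η₂ * (cM / (1 - cM)) *
        Real.sqrt ((ℓus * τ * ζ)^2 +
          ((Real.sqrt τ / (Real.sqrt (α₂/α₁) * Real.exp (-(τ*μ)/2))) * Real.sqrt (σc ζ))^2)) ∧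
      ∀ k : ℕ,
        Real.sqrt (‖x k - xss (u k) (w k)‖^2 + ‖u k - ustar (w k)‖^2) ≤
          η₁ * cM^k * Real.sqrt (‖x 0 - xss (u 0) (w 0)‖^2 + ‖u 0 - ustar (w 0)‖^2) +
          η₂ * (cM / (1 - cM)) *
            Real.sqrt ((ℓus * τ * sSup (z '' Set.Iio k))^2 +
              ((Real.sqrt τ / (Real.sqrt (α₂/α₁) * Real.exp (-(τ*μ)/2))) *
                Real.sqrt (σc (sSup (z '' Set.Iio k))))^2) := by
  have hτ0 : 0 < τ := (div_nonneg (Real.log_nonneg ((one_le_div hα₁).2 hα)) hμ.le).trans_lt hτ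
  set r := √(α₂ / α₁)
  set e := Real.exp (-(τ * μ) / 2)
  have hr2 : r ^ 2 = α₂ / α₁ := Real.sq_sqrt (div_nonneg (hα₁.le.trans hα) hα₁.le)
  have he2 : e ^ 2 = Real.exp (-(μ * τ)) := by rw [← Real.exp_nat_mul]; ring_nf
  have hW : ∀ x, ∀ v ∈ U, ∀ w ∈ Wd,
      ‖x - xss v w‖ ^ 2 ≤ V x v w / α₁ ∧ V x v w / α₁ ≤ r ^ 2 * ‖x - xss v w‖ ^ 2 := by
    intro x v hv w hw
    obtain ⟨h₁, h₂⟩ := hV x v hv w hw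
    rw [hr2, le_div_iff₀ hα₁, div_mul_eq_mul_div, div_le_div_iff_of_pos_right hα₁]
    exact ⟨by linarith, by linarith⟩
  have hWdec : ∀ k, ∀ v ∈ U, V (x (k + 1)) v (w (k + 1)) / α₁
      ≤ e ^ 2 * (V (x k) v (w k) / α₁) + τ * σc (z k) / α₁ := fun k v hv => by
    rw [he2, ← mul_div_assoc, ← add_div]; gcongr; exact hVdec k v hv
  have hdrift : ∀ k, ‖ustar (w (k + 1)) - ustar (w k)‖ ≤ ℓus * τ * z k := fun k =>
    (hustarLip _ (hwW k) _ (hwW (k + 1))).trans (by rw [mul_assoc]; gcongr; exact hwz k)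
  have hxss' v hv v' hv' w hw : ‖xss v w - xss v' w‖ ≤ max ℓx 0 * ‖v - v'‖ :=
    (hxss v hv v' hv' w hw).trans (by gcongr; exact le_max_left _ _)
  have hg' x x' w : ‖g x w - g x' w‖ ≤ max ℓg 0 * ‖x - x'‖ :=
    (hg x x' w).trans (by gcongr; exact le_max_left _ _)
  obtain ⟨η, c, hη, hc0, hc1, hiss⟩ := closedLoop_iss hP hnu hW hWdec hxss' hg' hT hcontr hdrift
    hupd huU hwW (Real.exp_pos _).le (Real.sqrt_nonneg _)
    (fun k => div_nonneg (mul_nonneg hτ0.le (hσc.nonneg (hz k))) hα₁.le)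
    (le_max_right _ _) (le_max_right _ _) hℓT.le hε0 hε1 hcT.1.le hcT.2
    (gain_lt_of_lt_epsBar hα₁ hα hμ hτ hε0 hℓT.le hcT.1.le hcT.2 (eigMin_pos hP hnu)
      (eigMin_le_eigMax hP.1 hnu) hεbar)
  have hre : 0 < r * e := mul_pos (Real.sqrt_pos.2 (div_pos (hα₁.trans_le hα) hα₁)) (Real.exp_pos _)
  refine ⟨η, η * (1 + r * e / √α₁) / c, c, hη, by positivity, hc0.le, hc1,
    hσc.const_mul_sqrt_sq_add_sq (mul_pos (by positivity) (div_pos hc0 (sub_pos.2 hc1)))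
      (by positivity) (by positivity), fun k => ?_⟩
  have hS0 : 0 ≤ sSup (z '' Set.Iio k) := Real.sSup_nonneg (by rintro _ ⟨j, -, rfl⟩; exact hz j)
  refine (hiss k _ (by positivity) fun j hj => hσc.add_sqrt_le_mul_sqrt_sq_add_sq
    (by positivity) hτ0.le hre hα₁ (hz j)
    (le_csSup ((Set.finite_Iio k).image z).bddAbove ⟨j, hj, rfl⟩)).trans_eq ?_
  field_simp [hc0.ne', (sub_pos.2 hc1).ne']

/-- **Theorem 1**: input-to-state stability of the discrete-time closed loop obtained by
interconnecting the sampled plant with the relaxed equilibrium-seeking iteration, with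
respect to the disturbance-rate bounds `z^k`. -/
theorem stmt3 {nx nu nw ny : ℕ} (hnu : 0 < nu)
    (U : Set (EuclideanSpace ℝ (Fin nu))) (Wd : Set (EuclideanSpace ℝ (Fin nw)))
    (hUcomp : IsCompact U) (hUconv : Convex ℝ U) (hWcomp : IsCompact Wd)
    (xss : EuclideanSpace ℝ (Fin nu) → EuclideanSpace ℝ (Fin nw) → EuclideanSpace ℝ (Fin nx))
    (ℓx : ℝ)
    (hxss : ∀ u ∈ U, ∀ u' ∈ U, ∀ w ∈ Wd, ‖xss u w - xss u' w‖ ≤ ℓx * ‖u - u'‖)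
    (g : EuclideanSpace ℝ (Fin nx) → EuclideanSpace ℝ (Fin nw) → EuclideanSpace ℝ (Fin ny))
    (ℓg : ℝ)
    (hg : ∀ x x' w, ‖g x w - g x' w‖ ≤ ℓg * ‖x - x'‖)
    (V : EuclideanSpace ℝ (Fin nx) → EuclideanSpace ℝ (Fin nu) → EuclideanSpace ℝ (Fin nw) → ℝ)
    (α₁ α₂ : ℝ) (hα₁ : 0 < α₁) (hα : α₁ ≤ α₂)
    (hV : ∀ x, ∀ u ∈ U, ∀ w ∈ Wd,
      α₁ * ‖x - xss u w‖^2 ≤ V x u w ∧ V x u w ≤ α₂ * ‖x - xss u w‖^2)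
    (σc : ℝ → ℝ) (hσc : IsKFunction σc)
    (P : Matrix (Fin nu) (Fin nu) ℝ) (hP : P.PosDef)
    (μ cT ℓT ℓus : ℝ) (hμ : 0 < μ) (hcT : cT ∈ Set.Ioo (0:ℝ) 1)
    (hℓT : 0 < ℓT) (hℓus : 0 < ℓus)
    (T : EuclideanSpace ℝ (Fin nu) → EuclideanSpace ℝ (Fin ny) → EuclideanSpace ℝ (Fin nu))
    (hT : ∀ u y y', ‖T u y - T u y'‖ ≤ ℓT * ‖y - y'‖)
    (ustar : EuclideanSpace ℝ (Fin nw) → EuclideanSpace ℝ (Fin nu))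
    (hustarU : ∀ w ∈ Wd, ustar w ∈ U)
    (hfix : ∀ w ∈ Wd, ustar w = T (ustar w) (g (xss (ustar w) w) w))
    (hcontr : ∀ w ∈ Wd, ∀ u ∈ U,
      pnorm P (T u (g (xss u w) w) - ustar w) ≤ cT * pnorm P (u - ustar w))
    (hustarLip : ∀ w ∈ Wd, ∀ w' ∈ Wd, ‖ustar w' - ustar w‖ ≤ ℓus * ‖w' - w‖)
    (τ ε : ℝ)
    (hτ : Real.log (α₂/α₁) / μ < τ)
    (hε0 : 0 < ε) (hε1 : ε ≤ 1)
    (hεbar : ε < Real.exp (τ*μ/2) * (Real.exp (τ*μ/2) - Real.sqrt (α₂/α₁)) /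
      (ℓg * ℓx * ℓT * (1 + (eigMax hP.1 / eigMin hP.1) * (1 + cT) / (1 - cT)) * (α₂/α₁)))
    (x : ℕ → EuclideanSpace ℝ (Fin nx)) (u : ℕ → EuclideanSpace ℝ (Fin nu))
    (w : ℕ → EuclideanSpace ℝ (Fin nw)) (z : ℕ → ℝ)
    (huU : ∀ k, u k ∈ U) (hwW : ∀ k, w k ∈ Wd) (hz : ∀ k, 0 ≤ z k)
    (hwz : ∀ k, ‖w (k+1) - w k‖ ≤ τ * z k)
    (hVdec : ∀ k, ∀ v ∈ U,
      V (x (k+1)) v (w (k+1)) ≤ Real.exp (-(μ*τ)) * V (x k) v (w k) + τ * σc (z k))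
    (hupd : ∀ k, u (k+1) = (1-ε) • u k + ε • T (u k) (g (x (k+1)) (w (k+1)))) :
    ∃ η₁ η₂ cM : ℝ, 0 < η₁ ∧ 0 < η₂ ∧ 0 ≤ cM ∧ cM < 1 ∧
      IsKFunction (fun ζ => η₂ * (cM / (1 - cM)) *
        Real.sqrt ((ℓus * τ * ζ)^2 +
          ((Real.sqrt τ / (Real.sqrt (α₂/α₁) * Real.exp (-(τ*μ)/2))) * Real.sqrt (σc ζ))^2)) ∧
      ∀ k : ℕ,
        Real.sqrt (‖x k - xss (u k) (w k)‖^2 + ‖u k - ustar (w k)‖^2) ≤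
          η₁ * cM^k * Real.sqrt (‖x 0 - xss (u 0) (w 0)‖^2 + ‖u 0 - ustar (w 0)‖^2) +
          η₂ * (cM / (1 - cM)) *
            Real.sqrt ((ℓus * τ * sSup (z '' Set.Iio k))^2 +
              ((Real.sqrt τ / (Real.sqrt (α₂/α₁) * Real.exp (-(τ*μ)/2))) *
                Real.sqrt (σc (sSup (z '' Set.Iio k))))^2) :=
  stmt3_general hnu U Wd xss ℓx hxss g ℓg hg V α₁ α₂ hα₁ hα hV σc hσc P hP μ cT ℓT ℓus hμ hcT hℓT
    hℓus T hT ustar hcontr hustarLip τ ε hτ hε0 hε1 hεbar x u w z huU hwW hz hwz hVdec hupd
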